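/- arXiv:2212.13935 — 5 statements merged into one kernel-verified Lean document; each statement's English description precedes it below -/
import Mathlib

section
/- Let p and q be monic real-rooted polynomials of degree n whose roots λ_1 > λ_2 > … > λ_n (of p) and μ_1 > μ_2 > … > μ_n (of q) are all simple, pairwise distinct (λ_i ≠ μ_i for all i), and such that p and q have a common interlacer. If the root vector of p majorizes the root vector of q, then for every k with 1 ≤ k < n one has Σ_{i=1}^{k} p(μ_i)/q'(μ_i) < 0. -/
/-!
With `dᵢ = λᵢ - μᵢ`, the residue `p(μᵢ)/q'(μᵢ)` equals `-dᵢ wᵢ`, where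
`wᵢ = ∏_{j ≠ i} (μᵢ - λⱼ)/(μᵢ - μⱼ)` is positive because of the common interlacer, so the claim is
`∑_{i ≤ k} dᵢ wᵢ > 0`. Comparing the coefficients of `x^(n-1)` in the Lagrange interpolation of
`p - q` at the `μᵢ` gives `∑ᵢ dᵢ wᵢ = ∑ᵢ dᵢ = 0`, which settles `k = n - 1` since `dₙ ≤ 0`.
For smaller `k`, induct on `n`: replacing the last two roots `λₙ₋₁, λₙ` of `p` by the single root
`λₙ₋₁ + λₙ - μₙ` and dropping `μₙ` preserves the majorization and the interlacing, and multiplies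
each weight `wᵢ`, `i < n - 1`, by a factor that is positive and increasing in `μᵢ`. Summation by
parts against the nonnegative partial sums of the smaller configuration then concludes; the
inequality is strict because `d₁ > 0`, and the factor is strictly increasing when `dₙ ≠ 0`.
-/

open Polynomial Finset

theorem Lagrange.sum_eval_nodal_div_eval_derivative_nodal {F ι : Type*} [Field F]
    [DecidableEq ι] {s : Finset ι} {u v : ι → F} (hv : Set.InjOn v s) :
    ∑ i ∈ s, (nodal s u).eval (v i) / (derivative (nodal s v)).eval (v i) =
      ∑ i ∈ s, v i - ∑ i ∈ s, u i := by
  rcases s.eq_empty_or_nonempty with rfl | hs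
  · simp
  have hdeg : (nodal s u - nodal s v).degree < #s := by
    rw [← degree_nodal (v := u)]
    exact degree_sub_lt_left (by rw [degree_nodal, degree_nodal]) nodal_ne_zero
      (by rw [nodal_monic.leadingCoeff, nodal_monic.leadingCoeff])
  have hcoeff := coeff_eq_sum hv hdeg
  rw [coeff_sub, nodal_eq, nodal_eq, prod_X_sub_C_coeff_card_pred _ _ hs.card_pos,
    prod_X_sub_C_coeff_card_pred _ _ hs.card_pos, ← nodal_eq, ← nodal_eq] at hcoeff
  rw [← neg_sub_neg, hcoeff]
  refine sum_congr rfl fun i hi => ?_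
  rw [eval_sub, eval_nodal_at_node hi, sub_zero, eval_nodal_derivative_eval_node_eq hi, eval_nodal,
    eval_nodal]

theorem Fin.sum_filter_val_lt {M : Type*} [AddCommMonoid M] (f : ℕ → M) {k n : ℕ}
    (hk : k ≤ n) :
    ∑ i ∈ univ.filter (fun i : Fin n => (i : ℕ) < k), f i = ∑ i ∈ range k, f i := by
  have : (univ.filter fun i : Fin n => (i : ℕ) < k).map Fin.valEmbedding = range k := by
    ext j
    simp only [mem_map, mem_filter, mem_univ, true_and, Fin.valEmbedding_apply, mem_range]
    exact ⟨fun ⟨i, hi, hij⟩ => hij ▸ hi, fun hj => ⟨⟨j, by omega⟩, hj, rfl⟩⟩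
  rw [← this, sum_map]
  rfl

section SummationByParts

variable {k : ℕ} {a κ : ℕ → ℝ}

theorem sum_range_mul_eq_by_parts (a κ : ℕ → ℝ) (k : ℕ) :
    ∑ i ∈ range k, a i * κ i =
      κ (k - 1) * ∑ i ∈ range k, a i +
        ∑ i ∈ range (k - 1), (κ i - κ (i + 1)) * ∑ j ∈ range (i + 1), a j := by
  have := sum_range_by_parts κ a k
  simp only [smul_eq_mul] at this
  rw [sum_congr rfl fun i _ => mul_comm (a i) (κ i), this, sub_eq_add_neg, ← sum_neg_distrib]
  congr 1
  exact sum_congr rfl fun i _ => by ring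

theorem sum_range_mul_nonneg_of_antitone (hA : ∀ m ≤ k, 0 ≤ ∑ i ∈ range m, a i)
    (hκ : ∀ i, i + 1 < k → κ (i + 1) ≤ κ i) (hκ0 : ∀ i < k, 0 ≤ κ i) :
    0 ≤ ∑ i ∈ range k, a i * κ i := by
  rcases Nat.eq_zero_or_pos k with rfl | hk
  · simp
  rw [sum_range_mul_eq_by_parts]
  refine add_nonneg (mul_nonneg (hκ0 _ (by omega)) (hA k le_rfl)) (sum_nonneg fun i hi => ?_)
  rw [mem_range] at hi
  exact mul_nonneg (sub_nonneg.mpr (hκ i (by omega))) (hA _ (by omega))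

theorem sum_range_mul_pos_of_strictAnti (hA : ∀ m ≤ k, 0 ≤ ∑ i ∈ range m, a i)
    (ha : 0 < a 0) (hk : 0 < k) (hκ : ∀ i, i + 1 < k → κ (i + 1) < κ i)
    (hκ0 : ∀ i < k, 0 < κ i) :
    0 < ∑ i ∈ range k, a i * κ i := by
  rw [sum_range_mul_eq_by_parts]
  have hlast : 0 ≤ κ (k - 1) * ∑ i ∈ range k, a i :=
    mul_nonneg (hκ0 _ (by omega)).le (hA k le_rfl)
  obtain rfl | hk := (Nat.succ_le_of_lt hk).eq_or_lt
  · simpa using mul_pos (hκ0 0 one_pos) ha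
  refine add_pos_of_nonneg_of_pos hlast (sum_pos' (fun i hi => ?_) ⟨0, ?_, ?_⟩)
  · rw [mem_range] at hi
    exact mul_nonneg (sub_nonneg.mpr (hκ i (by omega)).le) (hA _ (by omega))
  · exact mem_range.mpr (by omega)
  · simpa using mul_pos (sub_pos.mpr (hκ 0 hk)) ha

end SummationByParts

namespace RootMajorization

variable {n k i : ℕ} {lam mu : ℕ → ℝ}

def HasCommonInterlacer (n : ℕ) (lam mu : ℕ → ℝ) : Prop :=
  ∀ i j, i < j → j < n → max (lam j) (mu j) < min (lam i) (mu i)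

def Majorizes (n : ℕ) (lam mu : ℕ → ℝ) : Prop :=
  (∀ k ≤ n, ∑ i ∈ range k, mu i ≤ ∑ i ∈ range k, lam i) ∧
    ∑ i ∈ range n, lam i = ∑ i ∈ range n, mu i

noncomputable def weight (n : ℕ) (lam mu : ℕ → ℝ) (i : ℕ) : ℝ :=
  ∏ j ∈ (range n).erase i, (mu i - lam j) / (mu i - mu j)

namespace HasCommonInterlacer

variable {j : ℕ}

theorem mu_lt_mu (h : HasCommonInterlacer n lam mu) (hij : i < j) (hj : j < n) : mu j < mu i :=
  (max_lt_iff.mp ((h i j hij hj).trans_le (min_le_right _ _))).2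

theorem lam_lt_mu (h : HasCommonInterlacer n lam mu) (hij : i < j) (hj : j < n) : lam j < mu i :=
  (max_lt_iff.mp ((h i j hij hj).trans_le (min_le_right _ _))).1

theorem mu_lt_lam (h : HasCommonInterlacer n lam mu) (hij : i < j) (hj : j < n) : mu j < lam i :=
  (max_lt_iff.mp ((h i j hij hj).trans_le (min_le_left _ _))).2

theorem injOn (h : HasCommonInterlacer n lam mu) : Set.InjOn mu (range n) := by
  intro i hi j hj hij
  simp only [coe_range, Set.mem_Iio] at hi hj
  by_contra hne
  rcases lt_or_gt_of_ne hne with hlt | hlt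
  · exact (h.mu_lt_mu hlt hj).ne' hij
  · exact (h.mu_lt_mu hlt hi).ne hij

end HasCommonInterlacer

theorem weight_pos (h : HasCommonInterlacer n lam mu) (hi : i < n) : 0 < weight n lam mu i := by
  refine prod_pos fun j hj => ?_
  obtain ⟨hji, hj⟩ := mem_erase.mp hj
  rw [mem_range] at hj
  rcases lt_or_gt_of_ne hji with hlt | hlt
  · exact div_pos_of_neg_of_neg (sub_neg.mpr (h.mu_lt_lam hlt hi))
      (sub_neg.mpr (h.mu_lt_mu hlt hi))
  · exact div_pos (sub_pos.mpr (h.lam_lt_mu hlt hj)) (sub_pos.mpr (h.mu_lt_mu hlt hj))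

theorem eval_nodal_div_eval_derivative_nodal (hi : i < n) :
    (Lagrange.nodal (range n) lam).eval (mu i) /
        (derivative (Lagrange.nodal (range n) mu)).eval (mu i) =
      (mu i - lam i) * weight n lam mu i := by
  have hi : i ∈ range n := mem_range.mpr hi
  rw [Lagrange.eval_nodal_derivative_eval_node_eq hi, Lagrange.eval_nodal, Lagrange.eval_nodal,
    ← mul_prod_erase _ _ hi, weight, prod_div_distrib, mul_div_assoc]

theorem sum_mul_weight_eq (h : HasCommonInterlacer n lam mu) :
    ∑ i ∈ range n, (lam i - mu i) * weight n lam mu i =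
      ∑ i ∈ range n, lam i - ∑ i ∈ range n, mu i := by
  have := Lagrange.sum_eval_nodal_div_eval_derivative_nodal (u := lam) h.injOn
  rw [← neg_sub, ← this, ← sum_neg_distrib]
  refine sum_congr rfl fun i hi => ?_
  rw [eval_nodal_div_eval_derivative_nodal (mem_range.mp hi)]
  ring

theorem weight_succ (hi : i < n) :
    weight (n + 1) lam mu i = (mu i - lam n) / (mu i - mu n) * weight n lam mu i := by
  rw [weight, range_add_one, erase_insert_of_ne (by omega), prod_insert (by simp), weight]

theorem weight_update_of_le {m : ℕ} (hm : n ≤ m) (x : ℝ) :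
    weight n (Function.update lam m x) mu i = weight n lam mu i := by
  refine prod_congr rfl fun j hj => ?_
  rw [Function.update_of_ne (by grind)]

theorem Majorizes.mu_zero_le (h : Majorizes n lam mu) (hn : 0 < n) : mu 0 ≤ lam 0 := by
  simpa using h.1 1 hn

theorem Majorizes.lam_le_mu_last (h : Majorizes (n + 1) lam mu) : lam n ≤ mu n := by
  have := h.1 n (by omega)
  have htot := h.2
  rw [sum_range_succ, sum_range_succ] at htot
  linarith

def mergeLast (n : ℕ) (lam mu : ℕ → ℝ) : ℕ → ℝ :=
  Function.update lam n (lam n + lam (n + 1) - mu (n + 1))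

theorem mergeLast_of_lt (hi : i < n) : mergeLast n lam mu i = lam i :=
  Function.update_of_ne hi.ne _ _

theorem sum_range_mergeLast_of_le (hk : k ≤ n) :
    ∑ i ∈ range k, mergeLast n lam mu i = ∑ i ∈ range k, lam i :=
  sum_congr rfl fun _ hi => mergeLast_of_lt ((mem_range.mp hi).trans_le hk)

theorem majorizes_mergeLast (h : Majorizes (n + 2) lam mu) :
    Majorizes (n + 1) (mergeLast n lam mu) mu := by
  have htot : ∑ i ∈ range (n + 1), mergeLast n lam mu i = ∑ i ∈ range (n + 1), mu i := by
    have := h.2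
    rw [sum_range_succ, sum_range_mergeLast_of_le le_rfl, mergeLast, Function.update_self,
      sum_range_succ]
    rw [sum_range_succ, sum_range_succ, sum_range_succ, sum_range_succ] at this
    linarith
  refine ⟨fun k hk => ?_, htot⟩
  rcases hk.lt_or_eq with hk | rfl
  · rw [sum_range_mergeLast_of_le (by omega)]
    exact h.1 k (by omega)
  · exact htot.ge

theorem mergeLast_le (h : Majorizes (n + 2) lam mu) : mergeLast n lam mu n ≤ mu n :=
  (majorizes_mergeLast h).lam_le_mu_last

theorem hasCommonInterlacer_mergeLast (h : HasCommonInterlacer (n + 2) lam mu)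
    (hm : Majorizes (n + 2) lam mu) : HasCommonInterlacer (n + 1) (mergeLast n lam mu) mu := by
  intro i j hij hj
  rw [mergeLast_of_lt (by omega : i < n)]
  rcases (Nat.lt_succ_iff.mp hj).lt_or_eq with hj | rfl
  · rw [mergeLast_of_lt hj]
    exact h i j hij (by omega)
  · rw [max_eq_right (mergeLast_le hm)]
    exact (le_max_right _ _).trans_lt (h i j hij (by omega))

noncomputable def mergeFactor (a b m x : ℝ) : ℝ :=
  (x - a) * (x - b) / ((x - (a + b - m)) * (x - m))

section MergeFactor

variable {a b m x y : ℝ}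

theorem mergeFactor_pos (ha : a < x) (hb : b < x) (hab : a + b - m < x) (hm : m < x) :
    0 < mergeFactor a b m x :=
  div_pos (mul_pos (sub_pos.mpr ha) (sub_pos.mpr hb)) (mul_pos (sub_pos.mpr hab) (sub_pos.mpr hm))

theorem mergeFactor_eq_one_sub (hab : x ≠ a + b - m) (hm : x ≠ m) :
    mergeFactor a b m x = 1 - (a - m) * (m - b) / ((x - (a + b - m)) * (x - m)) := by
  have : (x - (a + b - m)) * (x - m) ≠ 0 := mul_ne_zero (sub_ne_zero.mpr hab) (sub_ne_zero.mpr hm)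
  rw [mergeFactor, eq_sub_iff_add_eq, ← add_div, div_eq_one_iff_eq this]
  ring

theorem mergeFactor_le_mergeFactor (hma : m < a) (hbm : b ≤ m) (hab : a + b - m < y)
    (hm : m < y) (hyx : y ≤ x) : mergeFactor a b m y ≤ mergeFactor a b m x := by
  rw [mergeFactor_eq_one_sub hab.ne' hm.ne', mergeFactor_eq_one_sub (hab.trans_le hyx).ne'
    (hm.trans_le hyx).ne', sub_le_sub_iff_left]
  exact div_le_div_of_nonneg_left (mul_nonneg (sub_nonneg.mpr hma.le) (sub_nonneg.mpr hbm))
    (mul_pos (sub_pos.mpr hab) (sub_pos.mpr hm))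
    (mul_le_mul (by linarith) (by linarith) (sub_pos.mpr hm).le (by linarith))

theorem mergeFactor_lt_mergeFactor (hma : m < a) (hbm : b < m) (hab : a + b - m < y)
    (hm : m < y) (hyx : y < x) : mergeFactor a b m y < mergeFactor a b m x := by
  rw [mergeFactor_eq_one_sub hab.ne' hm.ne', mergeFactor_eq_one_sub (hab.trans hyx).ne'
    (hm.trans hyx).ne', sub_lt_sub_iff_left]
  exact div_lt_div_of_pos_left (mul_pos (sub_pos.mpr hma) (sub_pos.mpr hbm))
    (mul_pos (sub_pos.mpr hab) (sub_pos.mpr hm))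
    (mul_lt_mul' (by linarith) (by linarith) (sub_pos.mpr hm).le (by linarith))

end MergeFactor

theorem weight_mergeLast (h : HasCommonInterlacer (n + 2) lam mu)
    (h' : HasCommonInterlacer (n + 1) (mergeLast n lam mu) mu) (hi : i < n) :
    weight (n + 2) lam mu i =
      weight (n + 1) (mergeLast n lam mu) mu i *
        mergeFactor (lam n) (lam (n + 1)) (mu (n + 1)) (mu i) := by
  have h₁ : mu i - mu n ≠ 0 := (sub_pos.mpr (h.mu_lt_mu hi (by omega))).ne'
  have h₂ : mu i - mu (n + 1) ≠ 0 := (sub_pos.mpr (h.mu_lt_mu (by omega) (by omega))).ne'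
  have h₃ : mu i - (lam n + lam (n + 1) - mu (n + 1)) ≠ 0 := by
    have := h'.lam_lt_mu hi (by omega)
    rw [mergeLast, Function.update_self] at this
    exact (sub_pos.mpr this).ne'
  rw [weight_succ (by omega), weight_succ hi, weight_succ hi, mergeLast,
    weight_update_of_le le_rfl, Function.update_self, mergeFactor]
  field_simp

theorem sum_range_mul_weight_mergeLast (h : HasCommonInterlacer (n + 2) lam mu)
    (hm : Majorizes (n + 2) lam mu) (hk : k ≤ n) :
    ∑ i ∈ range k, (lam i - mu i) * weight (n + 2) lam mu i =
      ∑ i ∈ range k, (mergeLast n lam mu i - mu i) * weight (n + 1) (mergeLast n lam mu) mu i *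
        mergeFactor (lam n) (lam (n + 1)) (mu (n + 1)) (mu i) := by
  refine sum_congr rfl fun i hi => ?_
  have hi : i < n := (mem_range.mp hi).trans_le hk
  rw [weight_mergeLast h (hasCommonInterlacer_mergeLast h hm) hi, mergeLast_of_lt hi, mul_assoc]

theorem lam_add_lam_sub_mu_lt_mu (h : HasCommonInterlacer (n + 2) lam mu)
    (hm : Majorizes (n + 2) lam mu) (hi : i < n) : lam n + lam (n + 1) - mu (n + 1) < mu i := by
  have := (hasCommonInterlacer_mergeLast h hm).lam_lt_mu hi (by omega)
  rwa [mergeLast, Function.update_self] at this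

theorem mergeFactor_pos_of_lt (h : HasCommonInterlacer (n + 2) lam mu)
    (hm : Majorizes (n + 2) lam mu) (hi : i < n) :
    0 < mergeFactor (lam n) (lam (n + 1)) (mu (n + 1)) (mu i) :=
  mergeFactor_pos (h.lam_lt_mu hi (by omega)) (h.lam_lt_mu (by omega) (by omega))
    (lam_add_lam_sub_mu_lt_mu h hm hi) (h.mu_lt_mu (by omega) (by omega))

theorem mergeFactor_succ_le (h : HasCommonInterlacer (n + 2) lam mu)
    (hm : Majorizes (n + 2) lam mu) (hi : i + 1 < n) :
    mergeFactor (lam n) (lam (n + 1)) (mu (n + 1)) (mu (i + 1)) ≤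
      mergeFactor (lam n) (lam (n + 1)) (mu (n + 1)) (mu i) :=
  mergeFactor_le_mergeFactor (h.mu_lt_lam (by omega) (by omega)) hm.lam_le_mu_last
    (lam_add_lam_sub_mu_lt_mu h hm hi) (h.mu_lt_mu (by omega) (by omega))
    (h.mu_lt_mu (by omega) (by omega)).le

theorem mergeFactor_succ_lt (h : HasCommonInterlacer (n + 2) lam mu)
    (hm : Majorizes (n + 2) lam mu) (hne : lam (n + 1) ≠ mu (n + 1)) (hi : i + 1 < n) :
    mergeFactor (lam n) (lam (n + 1)) (mu (n + 1)) (mu (i + 1)) <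
      mergeFactor (lam n) (lam (n + 1)) (mu (n + 1)) (mu i) :=
  mergeFactor_lt_mergeFactor (h.mu_lt_lam (by omega) (by omega))
    (hm.lam_le_mu_last.lt_of_ne hne) (lam_add_lam_sub_mu_lt_mu h hm hi)
    (h.mu_lt_mu (by omega) (by omega)) (h.mu_lt_mu (by omega) (by omega))

theorem sum_range_mul_weight_eq_last (h : HasCommonInterlacer (n + 1) lam mu)
    (hm : Majorizes (n + 1) lam mu) :
    ∑ i ∈ range n, (lam i - mu i) * weight (n + 1) lam mu i =
      (mu n - lam n) * weight (n + 1) lam mu n := by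
  have := sum_mul_weight_eq h
  rw [hm.2, sub_self, sum_range_succ] at this
  linarith

theorem sum_range_mul_weight_nonneg (h : HasCommonInterlacer n lam mu)
    (hm : Majorizes n lam mu) (hk : k ≤ n) :
    0 ≤ ∑ i ∈ range k, (lam i - mu i) * weight n lam mu i := by
  induction n generalizing lam k with
  | zero => simp [Nat.le_zero.mp hk]
  | succ n ih =>
    obtain rfl | rfl | hk : k = n + 1 ∨ k = n ∨ k < n := by omega
    · rw [sum_mul_weight_eq h, hm.2, sub_self]
    · rw [sum_range_mul_weight_eq_last h hm]
      exact mul_nonneg (sub_nonneg.mpr hm.lam_le_mu_last) (weight_pos h (by omega)).le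
    · obtain ⟨n, rfl⟩ : ∃ m, n = m + 1 := ⟨n - 1, by omega⟩
      rw [sum_range_mul_weight_mergeLast h hm (by omega)]
      exact sum_range_mul_nonneg_of_antitone
        (fun m _ => ih (hasCommonInterlacer_mergeLast h hm) (majorizes_mergeLast hm) (by omega))
        (fun i hi => mergeFactor_succ_le h hm (by omega))
        (fun i hi => (mergeFactor_pos_of_lt h hm (by omega)).le)

theorem sum_range_mul_weight_pos (h : HasCommonInterlacer n lam mu) (hm : Majorizes n lam mu)
    (h₀ : lam 0 ≠ mu 0) (hlast : lam (n - 1) ≠ mu (n - 1)) (hk₀ : 0 < k) (hkn : k < n) :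
    0 < ∑ i ∈ range k, (lam i - mu i) * weight n lam mu i := by
  obtain rfl | hk := (Nat.succ_le_of_lt hkn).eq_or_lt
  · rw [sum_range_mul_weight_eq_last h hm]
    exact mul_pos (sub_pos.mpr (hm.lam_le_mu_last.lt_of_ne hlast)) (weight_pos h (by omega))
  obtain ⟨n, rfl⟩ : ∃ m, n = m + 2 := ⟨n - 2, by omega⟩
  rw [sum_range_mul_weight_mergeLast h hm (by omega)]
  have h₀' : 0 < lam 0 - mu 0 := sub_pos.mpr ((hm.mu_zero_le (by omega)).lt_of_ne h₀.symm)
  refine sum_range_mul_pos_of_strictAnti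
    (fun m _ => sum_range_mul_weight_nonneg (hasCommonInterlacer_mergeLast h hm)
      (majorizes_mergeLast hm) (by omega)) ?_ hk₀
    (fun i hi => mergeFactor_succ_lt h hm hlast (by omega))
    (fun i hi => mergeFactor_pos_of_lt h hm (by omega))
  rw [mergeLast_of_lt (by omega)]
  exact mul_pos h₀' (weight_pos (hasCommonInterlacer_mergeLast h hm) (by omega))

end RootMajorization

theorem necessary_condition_for_majorization_general
    (n : ℕ) (lam mu : Fin n → ℝ)
    (hdistinct : ∀ i, lam i ≠ mu i)
    (hinterlacer : ∀ i j : Fin n, i < j → max (lam j) (mu j) < min (lam i) (mu i))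
    (p q : Polynomial ℝ)
    (hp : p = ∏ i, (X - C (lam i)))
    (hq : q = ∏ i, (X - C (mu i)))
    (hmaj : ∀ k ≤ n,
      ∑ i ∈ univ.filter (fun i : Fin n => (i : ℕ) < k), mu i ≤
        ∑ i ∈ univ.filter (fun i : Fin n => (i : ℕ) < k), lam i)
    (htot : ∑ i, lam i = ∑ i, mu i) :
    ∀ k, 1 ≤ k → k < n →
      ∑ i ∈ univ.filter (fun i : Fin n => (i : ℕ) < k),
        p.eval (mu i) / (Polynomial.derivative q).eval (mu i) < 0 := by
  intro k hk hkn
  obtain ⟨L, rfl⟩ : ∃ L : ℕ → ℝ, lam = fun i : Fin n => L i :=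
    ⟨_, funext fun i => (Fin.val_injective.extend_apply lam 0 i).symm⟩
  obtain ⟨M, rfl⟩ : ∃ M : ℕ → ℝ, mu = fun i : Fin n => M i :=
    ⟨_, funext fun i => (Fin.val_injective.extend_apply mu 0 i).symm⟩
  have hI : RootMajorization.HasCommonInterlacer n L M := fun i j hij hj =>
    hinterlacer ⟨i, by omega⟩ ⟨j, hj⟩ hij
  have hM : RootMajorization.Majorizes n L M := by
    refine ⟨fun k hk => ?_, ?_⟩
    · simpa only [Fin.sum_filter_val_lt _ hk] using hmaj k hk
    · simpa only [Fin.sum_univ_eq_sum_range] using htot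
  have hpos := RootMajorization.sum_range_mul_weight_pos hI hM (hdistinct ⟨0, by omega⟩)
    (hdistinct ⟨n - 1, by omega⟩) hk hkn
  subst hp hq
  simp only [Fin.prod_univ_eq_prod_range (fun i => X - C (L i)),
    Fin.prod_univ_eq_prod_range (fun i => X - C (M i)), ← Lagrange.nodal_eq]
  rw [Fin.sum_filter_val_lt (fun i => (Lagrange.nodal (range n) L).eval (M i) /
    (derivative (Lagrange.nodal (range n) M)).eval (M i)) hkn.le,
    sum_congr rfl fun i hi =>
      RootMajorization.eval_nodal_div_eval_derivative_nodal ((mem_range.mp hi).trans hkn)]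
  simpa only [← neg_sub (L _), neg_mul, sum_neg_distrib, neg_lt_zero] using hpos

/-- **Necessary condition for majorization.**
If monic real-rooted polynomials `p` and `q` of degree `n`, with simple, pairwise
distinct roots `λ₁ > … > λₙ` and `μ₁ > … > μₙ` and a common interlacer
(the intervals with endpoints `λᵢ, μᵢ` are pairwise disjoint), are such that the root
vector of `p` majorizes that of `q`, then every partial sum
`∑_{i=1}^{k} p(μᵢ)/q'(μᵢ)` with `1 ≤ k < n` is negative. -/
theorem necessary_condition_for_majorization
    (n : ℕ) (lam mu : Fin n → ℝ)
    (hlam : StrictAnti lam) (hmu : StrictAnti mu)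
    (hdistinct : ∀ i, lam i ≠ mu i)
    (hinterlacer : ∀ i j : Fin n, i < j → max (lam j) (mu j) < min (lam i) (mu i))
    (p q : Polynomial ℝ)
    (hp : p = ∏ i, (X - C (lam i)))
    (hq : q = ∏ i, (X - C (mu i)))
    (hmaj : ∀ k ≤ n,
      ∑ i ∈ univ.filter (fun i : Fin n => (i : ℕ) < k), mu i ≤
        ∑ i ∈ univ.filter (fun i : Fin n => (i : ℕ) < k), lam i)
    (htot : ∑ i, lam i = ∑ i, mu i) :
    ∀ k, 1 ≤ k → k < n →
      ∑ i ∈ univ.filter (fun i : Fin n => (i : ℕ) < k),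
        p.eval (mu i) / (Polynomial.derivative q).eval (mu i) < 0 :=
  necessary_condition_for_majorization_general n lam mu hdistinct hinterlacer p q hp hq hmaj htot
end

section
/- Let p and q be monic real-rooted polynomials of degree n with a common interlacer and simple pairwise distinct roots λ_1 > … > λ_n (of p) and μ_1 > … > μ_n (of q), and suppose p majorizes q. If there exists k with 1 < k < n such that Σ_{i=1}^{k} λ_i = Σ_{i=1}^{k} μ_i, then there exists k_0 ≤ k such that Σ_{i=1}^{k_0} q(λ_i)/p'(λ_i) < 0; in particular p does not strongly majorize q. -/
/-!
For `i ≤ k` the residue `q(λᵢ)/p'(λᵢ)` factors as `cᵢ · ĉᵢ`, where `ĉᵢ` is the residue at `λᵢ`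
of `q_k/p_k` for the heads `p_k = ∏_{j ≤ k} (X - λⱼ)`, `q_k = ∏_{j ≤ k} (X - μⱼ)`, and
`cᵢ = Q(λᵢ)/P(λᵢ)` for the tails `P = ∏_{j > k} (X - λⱼ)`, `Q = ∏_{j > k} (X - μⱼ)`.
Equal `k`-th partial sums give `deg (q_k - p_k) ≤ k - 2`, so the `ĉᵢ` sum to zero, while `ĉ₁ > 0`.
The tail of `λ` strictly majorizes that of `μ`, so by Karamata's inequality for `y ↦ 1/(x - y)`
the function `Q/P` is strictly decreasing to the right of the tail roots: `0 < c₁ < ⋯ < c_k`.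
Abel summation up to the first index where the partial sums of `ĉ` become nonpositive then gives
a negative partial sum of residues.

The roots of `(1 - ε) p + ε q` are `λᵢ - ε q(λᵢ)/p'(λᵢ) + o(ε)`, so a negative partial sum of
residues makes the corresponding partial sum of roots larger at `t = 1 - ε` than at `t = 1`.
-/

open Polynomial Finset Lagrange Filter Topology

theorem sum_range_mul_pos_of_strictAntiOn {w e : ℕ → ℝ} {m : ℕ} (hm : 2 ≤ m)
    (hw : StrictAntiOn w (Set.Iio m))
    (he : ∀ j, 1 ≤ j → j < m → 0 ≤ ∑ t ∈ range j, e t) (he0 : 0 < e 0)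
    (hlast : 0 ≤ w (m - 1) * ∑ t ∈ range m, e t) :
    0 < ∑ t ∈ range m, w t * e t := by
  have hw' {t} (ht : t + 1 < m) : w (t + 1) < w t :=
    hw (Set.mem_Iio.mpr (by omega)) (Set.mem_Iio.mpr ht) (Nat.lt_succ_self t)
  have hneg : ∑ t ∈ range (m - 1), (w (t + 1) - w t) * ∑ u ∈ range (t + 1), e u < 0 := by
    refine sum_neg' (fun t ht => ?_) ⟨0, mem_range.mpr (by omega), ?_⟩
    · rw [mem_range] at ht
      exact mul_nonpos_of_nonpos_of_nonneg (sub_nonpos.mpr (hw' (by omega)).le)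
        (he _ (by omega) (by omega))
    · rw [sum_range_one]
      exact mul_neg_of_neg_of_pos (sub_neg.mpr (hw' (by omega))) he0
  simp only [← smul_eq_mul] at hneg hlast ⊢
  rw [sum_range_by_parts]
  linarith

theorem exists_sum_range_mul_neg {w e : ℕ → ℝ} {k : ℕ} (hk : 0 < k)
    (hw : StrictMonoOn w (Set.Iio k)) (hw0 : ∀ t < k, 0 < w t) (he0 : 0 < e 0)
    (he : ∑ t ∈ range k, e t ≤ 0) :
    ∃ m, 1 ≤ m ∧ m ≤ k ∧ ∑ t ∈ range m, w t * e t < 0 := by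
  classical
  have hex : ∃ m, 1 ≤ m ∧ ∑ t ∈ range m, e t ≤ 0 := ⟨k, hk, he⟩
  obtain ⟨hm1, hm⟩ := Nat.find_spec hex
  have hmk : Nat.find hex ≤ k := Nat.find_min' hex ⟨hk, he⟩
  have hm2 : 2 ≤ Nat.find hex := by
    by_contra! h
    rw [show Nat.find hex = 1 by omega, sum_range_one] at hm
    linarith
  have hpos : 0 < ∑ t ∈ range (Nat.find hex), -w t * e t := by
    refine sum_range_mul_pos_of_strictAntiOn hm2 (hw.neg.mono (Set.Iio_subset_Iio hmk))
      (fun j hj1 hjm => ?_) he0 ?_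
    · exact (not_le.mp fun h => Nat.find_min hex hjm ⟨hj1, h⟩).le
    · nlinarith [hw0 (Nat.find hex - 1) (by omega)]
  refine ⟨Nat.find hex, hm1, hmk, ?_⟩
  simp only [neg_mul, sum_neg_distrib] at hpos
  linarith

def Majorizes (n : ℕ) (a b : ℕ → ℝ) : Prop :=
  (∀ j ≤ n, ∑ t ∈ range j, b t ≤ ∑ t ∈ range j, a t) ∧ ∑ t ∈ range n, a t = ∑ t ∈ range n, b t

theorem Majorizes.drop {n k : ℕ} {a b : ℕ → ℝ} (h : Majorizes n a b) (hkn : k ≤ n)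
    (hk : ∑ t ∈ range k, a t = ∑ t ∈ range k, b t) :
    Majorizes (n - k) (fun u => a (k + u)) (fun u => b (k + u)) := by
  have hsplit (c : ℕ → ℝ) (j : ℕ) :
      ∑ u ∈ range j, c (k + u) = ∑ t ∈ range (k + j), c t - ∑ t ∈ range k, c t := by
    rw [sum_range_add]; ring
  refine ⟨fun j hj => ?_, ?_⟩
  · simp only [hsplit]
    linarith [h.1 (k + j) (by omega)]
  · simp only [hsplit, Nat.add_sub_cancel' hkn, h.2, hk]

theorem sum_inv_sub_lt_of_majorizes {m : ℕ} {a b : ℕ → ℝ} (hm : 0 < m)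
    (ha : StrictAntiOn a (Set.Iio m)) (hb : AntitoneOn b (Set.Iio m)) (hab : Majorizes m a b)
    (h0 : b 0 < a 0) {x : ℝ} (hx : max (a 0) (b 0) < x) :
    ∑ u ∈ range m, (x - b u)⁻¹ < ∑ u ∈ range m, (x - a u)⁻¹ := by
  have hxa {u} (hu : u < m) : 0 < x - a u := by
    have := ha.antitoneOn (Set.mem_Iio.mpr hm) (Set.mem_Iio.mpr hu) (Nat.zero_le u)
    linarith [le_max_left (a 0) (b 0)]
  have hxb {u} (hu : u < m) : 0 < x - b u := by
    have := hb (Set.mem_Iio.mpr hm) (Set.mem_Iio.mpr hu) (Nat.zero_le u)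
    linarith [le_max_right (a 0) (b 0)]
  have hm2 : 2 ≤ m := by
    by_contra! h
    have := hab.2
    rw [show m = 1 by omega, sum_range_one, sum_range_one] at this
    linarith
  -- `(x - a)⁻¹ - (x - b)⁻¹ = (a - b) * ((x - a) * (x - b))⁻¹`, with decreasing weights
  have hslope : StrictAntiOn (fun u => ((x - a u) * (x - b u))⁻¹) (Set.Iio m) := by
    intro u hu v hv huv
    have hu' := Set.mem_Iio.mp hu
    have hv' := Set.mem_Iio.mp hv
    refine inv_strictAnti₀ (mul_pos (hxa hu') (hxb hu')) ?_
    exact mul_lt_mul (by linarith [ha hu hv huv]) (by linarith [hb hu hv huv.le])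
      (hxb hu') (hxa hv').le
  have hpos := sum_range_mul_pos_of_strictAntiOn hm2 hslope (e := fun u => a u - b u)
    (fun j _ hj => by rw [sum_sub_distrib]; linarith [hab.1 j hj.le])
    (by linarith) (by rw [sum_sub_distrib, hab.2, sub_self, mul_zero])
  rw [← sub_pos, ← sum_sub_distrib]
  convert hpos using 2 with u hu
  have hu := mem_range.mp hu
  field_simp [(hxa hu).ne', (hxb hu).ne']
  ring

theorem strictAntiOn_prod_sub_div_sub {m : ℕ} {a b : ℕ → ℝ} (hm : 0 < m)
    (ha : StrictAntiOn a (Set.Iio m)) (hb : AntitoneOn b (Set.Iio m)) (hab : Majorizes m a b)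
    (h0 : b 0 < a 0) :
    StrictAntiOn (fun x => ∏ u ∈ range m, (x - b u) / (x - a u)) (Set.Ioi (max (a 0) (b 0))) := by
  set M := max (a 0) (b 0)
  have hlt {x} (hx : M < x) {u} (hu : u < m) : a u < x ∧ b u < x := by
    have h1 := ha.antitoneOn (Set.mem_Iio.mpr hm) (Set.mem_Iio.mpr hu) (Nat.zero_le u)
    have h2 := hb (Set.mem_Iio.mpr hm) (Set.mem_Iio.mpr hu) (Nat.zero_le u)
    constructor <;> linarith [le_max_left (a 0) (b 0), le_max_right (a 0) (b 0)]
  set L : ℝ → ℝ := fun x => ∑ u ∈ range m, (Real.log (x - b u) - Real.log (x - a u))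
  have hL : ∀ x ∈ Set.Ioi M,
      HasDerivAt L (∑ u ∈ range m, (1 / (x - b u) - 1 / (x - a u))) x := by
    intro x hx
    exact HasDerivAt.fun_sum fun u hu =>
      (((hasDerivAt_id' x).sub_const (b u)).log (sub_pos.mpr (hlt hx (mem_range.mp hu)).2).ne').sub
        (((hasDerivAt_id' x).sub_const (a u)).log (sub_pos.mpr (hlt hx (mem_range.mp hu)).1).ne')
  have hLanti : StrictAntiOn L (Set.Ioi M) := by
    refine strictAntiOn_of_deriv_neg (convex_Ioi M)
      (fun x hx => (hL x hx).continuousAt.continuousWithinAt) fun x hx => ?_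
    rw [interior_Ioi] at hx
    rw [(hL x hx).deriv, sum_sub_distrib, sub_neg]
    simpa only [one_div] using sum_inv_sub_lt_of_majorizes hm ha hb hab h0 hx
  have hexp : ∀ x ∈ Set.Ioi M, ∏ u ∈ range m, (x - b u) / (x - a u) = Real.exp (L x) := by
    intro x hx
    rw [Real.exp_sum]
    refine prod_congr rfl fun u hu => ?_
    obtain ⟨hau, hbu⟩ := hlt hx (mem_range.mp hu)
    rw [← Real.log_div (sub_pos.mpr hbu).ne' (sub_pos.mpr hau).ne',
      Real.exp_log (div_pos (sub_pos.mpr hbu) (sub_pos.mpr hau))]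
  intro x hx y hy hxy
  simp only [hexp x hx, hexp y hy, Real.exp_lt_exp]
  exact hLanti hx hy hxy

theorem sum_eval_nodal_div_prod_erase_sub_eq_zero {F ι : Type*} [Field F] [DecidableEq ι]
    {s : Finset ι} {a b : ι → F} (ha : Set.InjOn a s) (hab : ∑ i ∈ s, a i = ∑ i ∈ s, b i) :
    ∑ i ∈ s, (nodal s b).eval (a i) / ∏ j ∈ s.erase i, (a i - a j) = 0 := by
  rcases s.eq_empty_or_nonempty with rfl | hs
  · simp
  have hdeg : (nodal s b - nodal s a).degree < #s := by
    rw [← degree_nodal (v := b)]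
    exact degree_sub_lt_left (by rw [degree_nodal, degree_nodal]) (nodal_ne_zero)
      (by rw [nodal_monic.leadingCoeff, nodal_monic.leadingCoeff])
  have hcoeff (v : ι → F) : (nodal s v).coeff (#s - 1) = -∑ i ∈ s, v i :=
    prod_X_sub_C_coeff_card_pred s v hs.card_pos
  have := coeff_eq_sum ha hdeg
  rw [coeff_sub, hcoeff, hcoeff, hab, sub_self] at this
  refine (sum_congr rfl fun i hi => ?_).trans this.symm
  rw [eval_sub, eval_nodal_at_node hi, sub_zero]

theorem eval_div_eval_derivative_nodal_eq_mul {F : Type*} [Field F] (a b : ℕ → F) {n k t : ℕ}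
    (hkn : k ≤ n) (ht : t < k) :
    (nodal (range n) b).eval (a t) / (derivative (nodal (range n) a)).eval (a t) =
      (∏ u ∈ range (n - k), (a t - b (k + u)) / (a t - a (k + u))) *
        ((nodal (range k) b).eval (a t) / ∏ s ∈ (range k).erase t, (a t - a s)) := by
  have herase : (range n).erase t = (range k).erase t ∪ Ico k n := by
    ext s; simp only [mem_erase, mem_range, mem_union, mem_Ico]; omega
  have hdisj : Disjoint ((range k).erase t) (Ico k n) := by
    rw [disjoint_left]; intro s; simp only [mem_erase, mem_range, mem_Ico]; omega
  rw [eval_nodal_derivative_eval_node_eq (mem_range.mpr (by omega)), eval_nodal, eval_nodal,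
    eval_nodal, herase, prod_union hdisj, ← prod_range_mul_prod_Ico _ hkn,
    prod_Ico_eq_prod_range, prod_Ico_eq_prod_range, prod_div_distrib, mul_div_mul_comm, mul_comm]

def HasCommonInterlacer (n : ℕ) (a b : ℕ → ℝ) : Prop :=
  ∀ s t, s < t → t < n → max (a t) (b t) < min (a s) (b s)

namespace HasCommonInterlacer

variable {n : ℕ} {a b : ℕ → ℝ}

theorem lt_left (h : HasCommonInterlacer n a b) {s t : ℕ} (hst : s < t) (ht : t < n) :
    a t < a s ∧ b t < a s :=
  ⟨(le_max_left _ _).trans_lt ((h s t hst ht).trans_le (min_le_left _ _)),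
    (le_max_right _ _).trans_lt ((h s t hst ht).trans_le (min_le_left _ _))⟩

theorem symm (h : HasCommonInterlacer n a b) : HasCommonInterlacer n b a := fun s t hst ht => by
  simpa only [max_comm, min_comm] using h s t hst ht

theorem strictAntiOn_left (h : HasCommonInterlacer n a b) : StrictAntiOn a (Set.Iio n) :=
  fun _ _ _ ht hst => (h.lt_left hst ht).1

theorem drop (h : HasCommonInterlacer n a b) (k : ℕ) :
    HasCommonInterlacer (n - k) (fun u => a (k + u)) (fun u => b (k + u)) :=
  fun s t hst ht => h (k + s) (k + t) (by omega) (by omega)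

end HasCommonInterlacer

theorem exists_sum_range_residue_neg {n k : ℕ} {a b : ℕ → ℝ} (hab : HasCommonInterlacer n a b)
    (hne : ∀ t < n, a t ≠ b t) (hmaj : Majorizes n a b) (hk : 0 < k) (hkn : k < n)
    (hsum : ∑ t ∈ range k, a t = ∑ t ∈ range k, b t) :
    ∃ k₀, 1 ≤ k₀ ∧ k₀ ≤ k ∧ ∑ t ∈ range k₀,
      (nodal (range n) b).eval (a t) / (derivative (nodal (range n) a)).eval (a t) < 0 := by
  have hb0 : b 0 < a 0 := by
    have := hmaj.1 1 (by omega)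
    simp only [sum_range_one] at this
    exact this.lt_of_ne (hne 0 (by omega)).symm
  have hbk : b (k + 0) < a (k + 0) := by
    have := hmaj.1 (k + 1) (by omega)
    rw [sum_range_succ, sum_range_succ, hsum, add_le_add_iff_left] at this
    exact this.lt_of_ne (hne k hkn).symm
  have hg := strictAntiOn_prod_sub_div_sub (by omega) (hab.drop k).strictAntiOn_left
    (hab.drop k).symm.strictAntiOn_left.antitoneOn (hmaj.drop hkn.le hsum) hbk
  have hmem {t : ℕ} (ht : t < k) : a t ∈ Set.Ioi (max (a (k + 0)) (b (k + 0))) :=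
    max_lt (hab.lt_left (by omega) (by omega)).1 (hab.lt_left (by omega) (by omega)).2
  set c : ℕ → ℝ := fun t => ∏ u ∈ range (n - k), (a t - b (k + u)) / (a t - a (k + u))
  set chat : ℕ → ℝ := fun t => (nodal (range k) b).eval (a t) / ∏ s ∈ (range k).erase t, (a t - a s)
  have hc : StrictMonoOn c (Set.Iio k) := fun s hs t ht hst =>
    hg (hmem ht) (hmem hs) (hab.strictAntiOn_left (Set.Iio_subset_Iio hkn.le hs)
      (Set.Iio_subset_Iio hkn.le ht) hst)
  have hc0 : ∀ t < k, 0 < c t := fun t ht => prod_pos fun u hu => by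
    have := hab.lt_left (s := t) (t := k + u) (by omega) (by simp at hu; omega)
    exact div_pos (by linarith) (by linarith)
  have hchat0 : 0 < chat 0 := by
    refine div_pos ?_ (prod_pos fun s hs => ?_)
    · rw [eval_nodal]
      refine prod_pos fun s hs => ?_
      rcases Nat.eq_zero_or_pos s with rfl | hs0
      · linarith
      · linarith [(hab.lt_left hs0 (by simp at hs; omega)).2]
    · simp only [mem_erase, mem_range] at hs
      linarith [(hab.lt_left (Nat.pos_of_ne_zero hs.1) (by omega)).1]
  have hchat : ∑ t ∈ range k, chat t = 0 := sum_eval_nodal_div_prod_erase_sub_eq_zero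
    (hab.strictAntiOn_left.injOn.mono fun t ht => by simp at ht ⊢; omega) hsum
  obtain ⟨k₀, hk₀, hk₀k, hneg⟩ := exists_sum_range_mul_neg hk hc hc0 hchat0 hchat.le
  refine ⟨k₀, hk₀, hk₀k, ?_⟩
  rwa [sum_congr rfl fun t ht => eval_div_eval_derivative_nodal_eq_mul a b hkn.le
    (by simp at ht; omega)]

theorem eq_of_isRoot_nodal {n : ℕ} {f g : Fin n → ℝ} (hf : StrictAnti f) (hg : Antitone g)
    (h : ∀ i, (nodal univ g).IsRoot (f i)) : g = f := by
  classical
  have hsub : univ.image f ⊆ univ.image g := by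
    intro x hx
    obtain ⟨i, -, rfl⟩ := mem_image.mp hx
    obtain ⟨j, -, hj⟩ := (isRoot_prod _ _ _).mp (h i)
    exact mem_image.mpr ⟨j, mem_univ j, by simpa [sub_eq_zero, eq_comm] using hj⟩
  have hcard : #(univ.image f) = #(univ : Finset (Fin n)) := card_image_of_injective _ hf.injective
  have himage := eq_of_subset_of_card_le hsub (hcard ▸ card_image_le)
  have hginj : Function.Injective g := by
    rw [← Set.injOn_univ, ← coe_univ, ← card_image_iff, ← himage, hcard]
  refine ((hg.strictAnti_of_injective hginj).range_inj hf).mp ?_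
  simpa only [coe_image, coe_univ, Set.image_univ] using
    congrArg ((↑) : Finset ℝ → Set ℝ) himage.symm

theorem eventually_exists_root_of_simple_root {p q : ℝ[X]} {x : ℝ} (hx : p.IsRoot x)
    (hp' : (derivative p).eval x ≠ 0) {η : ℝ} (hη : 0 < η) :
    ∀ᶠ ε in 𝓝[>] 0, ∃ y ∈ Set.Icc (x - ε * (q.eval x / (derivative p).eval x + η))
      (x - ε * (q.eval x / (derivative p).eval x - η)), (1 - ε) * p.eval y + ε * q.eval y = 0 := by
  set r := q.eval x / (derivative p).eval x
  set g := p /ₘ (X - C x)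
  have hpg : p = (X - C x) * g := (mul_divByMonic_eq_iff_isRoot.mpr hx).symm
  have hgx : g.eval x = (derivative p).eval x := by
    conv_rhs => rw [hpg]
    simp
  set φ : ℝ → ℝ → ℝ := fun ε s =>
    (1 - ε) * (s - r) * g.eval (x + ε * (s - r)) + q.eval (x + ε * (s - r))
  have hφ (ε s : ℝ) : (1 - ε) * p.eval (x + ε * (s - r)) + ε * q.eval (x + ε * (s - r)) =
      ε * φ ε s := by
    rw [hpg, eval_mul]; simp only [φ, eval_sub, eval_X, eval_C]; ring
  have hφ0 (s : ℝ) : φ 0 s = s * (derivative p).eval x := by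
    simp only [φ, r, zero_mul, add_zero, sub_zero, one_mul, hgx]
    field_simp
    ring
  have hcont (s : ℝ) : Continuous (φ · s) := by fun_prop
  have hsign : ∀ᶠ ε in 𝓝[>] 0, φ ε η * φ ε (-η) < 0 := by
    refine nhdsWithin_le_nhds (((hcont η).mul (hcont (-η))).tendsto 0 |>.eventually_lt_const ?_)
    show φ 0 η * φ 0 (-η) < 0
    rw [hφ0, hφ0]
    nlinarith [mul_pos hη hη, sq_pos_of_ne_zero hp']
  filter_upwards [hsign, self_mem_nhdsWithin] with ε hε (hε0 : 0 < ε)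
  have hcont' : Continuous (φ ε) := by fun_prop
  obtain ⟨s, hs, hs0⟩ : (0 : ℝ) ∈ φ ε '' Set.uIcc (-η) η := by
    refine intermediate_value_uIcc hcont'.continuousOn (Set.mem_uIcc.mpr ?_)
    rcases mul_neg_iff.mp hε with h | h
    · exact Or.inl ⟨h.2.le, h.1.le⟩
    · exact Or.inr ⟨h.1.le, h.2.le⟩
  rw [Set.uIcc_of_le (by linarith)] at hs
  refine ⟨x + ε * (s - r), ⟨by nlinarith [hs.1], by nlinarith [hs.2]⟩, ?_⟩
  rw [hφ, hs0, mul_zero]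

theorem exists_sum_lt_sum_roots_of_sum_residue_neg {n : ℕ} {lam : Fin n → ℝ}
    (hlam : StrictAnti lam) {p q : ℝ[X]} (hp : p = nodal univ lam) {Lam : ℝ → Fin n → ℝ}
    (hLam : ∀ t ∈ Set.Icc (0 : ℝ) 1, C t * p + C (1 - t) * q = nodal univ (Lam t))
    (hLamanti : ∀ t ∈ Set.Icc (0 : ℝ) 1, Antitone (Lam t)) {s : Finset (Fin n)}
    (hs : ∑ i ∈ s, q.eval (lam i) / (derivative p).eval (lam i) < 0) :
    ∃ t ∈ Set.Icc (0 : ℝ) 1, ∑ i ∈ s, Lam 1 i < ∑ i ∈ s, Lam t i := by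
  set r : Fin n → ℝ := fun i => q.eval (lam i) / (derivative p).eval (lam i)
  set η : ℝ := -(∑ i ∈ s, r i) / (#s + 1)
  have hη : 0 < η := div_pos (neg_pos.mpr hs) (by positivity)
  have hrη : ∑ i ∈ s, (r i + η) < 0 := by
    rw [sum_add_distrib, sum_const, nsmul_eq_mul]
    have : ∑ i ∈ s, r i + #s * η = (∑ i ∈ s, r i) / (#s + 1) := by
      simp only [η]; field_simp; ring
    rw [this]
    exact div_neg_of_neg_of_pos hs (by positivity)
  have hroot (i : Fin n) : p.IsRoot (lam i) := hp ▸ eval_nodal_at_node (mem_univ i)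
  have hp' (i : Fin n) : (derivative p).eval (lam i) ≠ 0 := by
    rw [hp, eval_nodal_derivative_eval_node_eq (mem_univ i), eval_nodal]
    exact prod_ne_zero_iff.mpr fun j hj =>
      sub_ne_zero.mpr (hlam.injective.ne (mem_erase.mp hj).1.symm)
  have hsep (i j : Fin n) :
      ∀ᶠ ε in 𝓝[>] 0, i < j → lam j - ε * (r j - η) < lam i - ε * (r i + η) := by
    refine eventually_imp_distrib_left.mpr fun hij => nhdsWithin_le_nhds ?_
    refine Tendsto.eventually_lt ?_ ?_ (hlam hij)
    · exact Continuous.tendsto' (by fun_prop) _ _ (by simp)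
    · exact Continuous.tendsto' (by fun_prop) _ _ (by simp)
  have hsmall : ∀ᶠ ε in 𝓝[>] (0 : ℝ), ε < 1 := nhdsWithin_le_nhds (eventually_lt_nhds one_pos)
  have hroots := eventually_all.mpr fun i =>
    eventually_exists_root_of_simple_root (q := q) (hroot i) (hp' i) hη
  have hsep' := eventually_all.mpr fun i => eventually_all.mpr (hsep i)
  obtain ⟨ε, ⟨⟨hε1, hroots⟩, hsep⟩, hε0 : 0 < ε⟩ :=
    ((hsmall.and hroots).and hsep').and self_mem_nhdsWithin |>.exists
  choose y hy hy0 using hroots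
  have hyanti : StrictAnti y := fun i j hij => (hy j).2.trans_lt ((hsep i j hij).trans_le (hy i).1)
  have h1 : (1 : ℝ) ∈ Set.Icc (0 : ℝ) 1 := ⟨zero_le_one, le_rfl⟩
  have ht : 1 - ε ∈ Set.Icc (0 : ℝ) 1 := ⟨by linarith, by linarith⟩
  have hLam1 : Lam 1 = lam := eq_of_isRoot_nodal hlam (hLamanti 1 h1) fun i => by
    rw [← hLam 1 h1, sub_self, map_one, map_zero, one_mul, zero_mul, add_zero]
    exact hroot i
  have hLamt : Lam (1 - ε) = y := eq_of_isRoot_nodal hyanti (hLamanti _ ht) fun i => by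
    rw [← hLam _ ht, sub_sub_cancel, IsRoot, eval_add, eval_mul, eval_mul, eval_C, eval_C]
    exact hy0 i
  refine ⟨1 - ε, ht, ?_⟩
  rw [hLam1, hLamt]
  calc ∑ i ∈ s, lam i < ∑ i ∈ s, (lam i - ε * (r i + η)) := by
        rw [sum_sub_distrib, ← mul_sum]
        linarith [mul_neg_of_pos_of_neg hε0 hrη]
    _ ≤ ∑ i ∈ s, y i := sum_le_sum fun i _ => (hy i).1

theorem sum_filter_val_lt_eq_sum_range {M : Type*} [AddCommMonoid M] {n k : ℕ} (hk : k ≤ n)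
    (f : ℕ → M) :
    ∑ i ∈ univ.filter (fun i : Fin n => (i : ℕ) < k), f i = ∑ t ∈ range k, f t := by
  refine sum_bij (fun i _ => i) (fun i hi => ?_) (fun i _ j _ h => Fin.ext h) (fun t ht => ?_)
    (fun _ _ => rfl)
  · simpa using hi
  · exact ⟨⟨t, by simp at ht; omega⟩, by simpa using ht, rfl⟩

theorem nodal_univ_eq_nodal_range {R : Type*} [CommRing R] {n : ℕ} {g : Fin n → R} {a : ℕ → R}
    (ha : ∀ i : Fin n, a i = g i) : nodal univ g = nodal (range n) a := by
  simp only [nodal, ← ha]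
  exact Fin.prod_univ_eq_prod_range (fun t => X - C (a t)) n

theorem majorization_without_strong_majorization_general
    (n : ℕ) (lam mu : Fin n → ℝ)
    (hlam : StrictAnti lam)
    (hdistinct : ∀ i, lam i ≠ mu i)
    (hinterlacer : ∀ i j : Fin n, i < j → max (lam j) (mu j) < min (lam i) (mu i))
    (p q : Polynomial ℝ)
    (hp : p = ∏ i, (X - C (lam i)))
    (hq : q = ∏ i, (X - C (mu i)))
    (hmaj : ∀ k ≤ n,
      ∑ i ∈ univ.filter (fun i : Fin n => (i : ℕ) < k), mu i ≤
        ∑ i ∈ univ.filter (fun i : Fin n => (i : ℕ) < k), lam i)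
    (htot : ∑ i, lam i = ∑ i, mu i)
    (Lam : ℝ → Fin n → ℝ)
    (hLamroots : ∀ t ∈ Set.Icc (0 : ℝ) 1,
      C t * p + C (1 - t) * q = ∏ i, (X - C (Lam t i)))
    (hLamanti : ∀ t ∈ Set.Icc (0 : ℝ) 1, ∀ i j : Fin n, i ≤ j → Lam t j ≤ Lam t i)
    (k : ℕ) (hk1 : 1 < k) (hkn : k < n)
    (heq : ∑ i ∈ univ.filter (fun i : Fin n => (i : ℕ) < k), lam i =
      ∑ i ∈ univ.filter (fun i : Fin n => (i : ℕ) < k), mu i) :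
    (∃ k₀, 1 ≤ k₀ ∧ k₀ ≤ k ∧
      ∑ i ∈ univ.filter (fun i : Fin n => (i : ℕ) < k₀),
        q.eval (lam i) / (Polynomial.derivative p).eval (lam i) < 0) ∧
    ¬ (∀ s ∈ Set.Icc (0 : ℝ) 1, ∀ t ∈ Set.Icc (0 : ℝ) 1, t ≤ s → ∀ m ≤ n,
        ∑ i ∈ univ.filter (fun i : Fin n => (i : ℕ) < m), Lam t i ≤
          ∑ i ∈ univ.filter (fun i : Fin n => (i : ℕ) < m), Lam s i) := by
  obtain ⟨a, ha⟩ : ∃ a : ℕ → ℝ, ∀ i : Fin n, a i = lam i :=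
    ⟨_, Fin.val_injective.extend_apply lam 0⟩
  obtain ⟨b, hb⟩ : ∃ b : ℕ → ℝ, ∀ i : Fin n, b i = mu i :=
    ⟨_, Fin.val_injective.extend_apply mu 0⟩
  have hp' : p = nodal (range n) a := hp.trans (nodal_univ_eq_nodal_range ha)
  have hq' : q = nodal (range n) b := hq.trans (nodal_univ_eq_nodal_range hb)
  have hinter : HasCommonInterlacer n a b := fun s t hst ht => by
    simpa only [← ha, ← hb, Fin.val_mk] using hinterlacer ⟨s, by omega⟩ ⟨t, ht⟩ hst
  have hmaj' : Majorizes n a b := by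
    refine ⟨fun j hj => ?_, ?_⟩
    · simpa only [← ha, ← hb, sum_filter_val_lt_eq_sum_range hj] using hmaj j hj
    · simpa only [← ha, ← hb, Fin.sum_univ_eq_sum_range] using htot
  have hk : ∑ t ∈ range k, a t = ∑ t ∈ range k, b t := by
    simpa only [← ha, ← hb, sum_filter_val_lt_eq_sum_range hkn.le] using heq
  have hne : ∀ t < n, a t ≠ b t := fun t ht => by
    simpa only [← ha, ← hb, Fin.val_mk] using hdistinct ⟨t, ht⟩
  obtain ⟨k₀, hk₀, hk₀k, hneg⟩ :=
    exists_sum_range_residue_neg hinter hne hmaj' (by omega) hkn hk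
  have hres : ∑ i ∈ univ.filter (fun i : Fin n => (i : ℕ) < k₀),
      q.eval (lam i) / (derivative p).eval (lam i) < 0 := by
    simp only [hp', hq', ← ha]
    exact (sum_filter_val_lt_eq_sum_range (by omega) fun t =>
      (nodal (range n) b).eval (a t) / (derivative (nodal (range n) a)).eval (a t)).trans_lt hneg
  refine ⟨⟨k₀, hk₀, hk₀k, hres⟩, fun hmono => ?_⟩
  obtain ⟨t, ht, hlt⟩ := exists_sum_lt_sum_roots_of_sum_residue_neg hlam hp hLamroots hLamanti hres
  exact (hmono 1 ⟨zero_le_one, le_rfl⟩ t ht ht.2 k₀ (by omega)).not_gt hlt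

/-- **Simple majorization without strong majorization.**
Let `p, q` be monic real-rooted polynomials of degree `n` with a common interlacer and
simple pairwise distinct roots `λ₁ > … > λₙ` (of `p`) and `μ₁ > … > μₙ` (of `q`), and
suppose `p` majorizes `q`.  If some intermediate partial sums of roots coincide, i.e.
`∑_{i=1}^{k} λᵢ = ∑_{i=1}^{k} μᵢ` for some `1 < k < n`, then some partial sum of
residues `∑_{i=1}^{k₀} q(λᵢ)/p'(λᵢ)` with `k₀ ≤ k` is negative; in particular `p`
does not strongly majorize `q` (here `Λ t 1 ≥ … ≥ Λ t n` are the roots of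
`t·p + (1−t)·q`). -/
theorem majorization_without_strong_majorization
    (n : ℕ) (lam mu : Fin n → ℝ)
    (hlam : StrictAnti lam) (hmu : StrictAnti mu)
    (hdistinct : ∀ i, lam i ≠ mu i)
    (hinterlacer : ∀ i j : Fin n, i < j → max (lam j) (mu j) < min (lam i) (mu i))
    (p q : Polynomial ℝ)
    (hp : p = ∏ i, (X - C (lam i)))
    (hq : q = ∏ i, (X - C (mu i)))
    (hmaj : ∀ k ≤ n,
      ∑ i ∈ univ.filter (fun i : Fin n => (i : ℕ) < k), mu i ≤
        ∑ i ∈ univ.filter (fun i : Fin n => (i : ℕ) < k), lam i)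
    (htot : ∑ i, lam i = ∑ i, mu i)
    (Lam : ℝ → Fin n → ℝ)
    (hLamroots : ∀ t ∈ Set.Icc (0 : ℝ) 1,
      C t * p + C (1 - t) * q = ∏ i, (X - C (Lam t i)))
    (hLamanti : ∀ t ∈ Set.Icc (0 : ℝ) 1, ∀ i j : Fin n, i ≤ j → Lam t j ≤ Lam t i)
    (k : ℕ) (hk1 : 1 < k) (hkn : k < n)
    (heq : ∑ i ∈ univ.filter (fun i : Fin n => (i : ℕ) < k), lam i =
      ∑ i ∈ univ.filter (fun i : Fin n => (i : ℕ) < k), mu i) :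
    (∃ k₀, 1 ≤ k₀ ∧ k₀ ≤ k ∧
      ∑ i ∈ univ.filter (fun i : Fin n => (i : ℕ) < k₀),
        q.eval (lam i) / (Polynomial.derivative p).eval (lam i) < 0) ∧
    ¬ (∀ s ∈ Set.Icc (0 : ℝ) 1, ∀ t ∈ Set.Icc (0 : ℝ) 1, t ≤ s → ∀ m ≤ n,
        ∑ i ∈ univ.filter (fun i : Fin n => (i : ℕ) < m), Lam t i ≤
          ∑ i ∈ univ.filter (fun i : Fin n => (i : ℕ) < m), Lam s i) :=
  majorization_without_strong_majorization_general n lam mu hlam hdistinct hinterlacer p q hp hq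
    hmaj htot Lam hLamroots hLamanti k hk1 hkn heq
end

section
/- Let r_1 < r_2 < … < r_k be positive real numbers and let δ_1, …, δ_k be real numbers such that Σ_{i=1}^{s} δ_i ≤ 0 for every s < k and Σ_{i=1}^{s_0} δ_i < 0 for at least one index s_0 < k. Then Σ_{i=1}^{k} δ_i < (1/r_k)·Σ_{i=1}^{k} δ_i r_i; in particular, if moreover Σ_{i=1}^{k} δ_i r_i ≤ 0, then Σ_{i=1}^{k} δ_i < 0. -/
open Finset

/-- **Monotonicity lemma for weighted partial sums (increasing weights).**
Let `0 < r₁ < r₂ < … < r_k` (indexed here by `0, …, k-1`) and `δ₁, …, δ_k` be reals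
such that every proper partial sum `∑_{i=1}^{s} δᵢ` (`1 ≤ s < k`) is `≤ 0` and at
least one of them is `< 0`.  Then `∑ δᵢ < (1/r_k) · ∑ δᵢ rᵢ`; in particular if
moreover `∑ δᵢ rᵢ ≤ 0` then `∑ δᵢ < 0`. -/
theorem weighted_partial_sums_lemma
    (k : ℕ) (hk : 2 ≤ k) (r δ : ℕ → ℝ)
    (hrpos : 0 < r 0)
    (hrmono : ∀ i j, i < j → j < k → r i < r j)
    (hpart : ∀ s, 1 ≤ s → s < k → ∑ i ∈ Finset.range s, δ i ≤ 0)
    (hneg : ∃ s₀, 1 ≤ s₀ ∧ s₀ < k ∧ ∑ i ∈ Finset.range s₀, δ i < 0) :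
    (∑ i ∈ Finset.range k, δ i) <
      (1 / r (k - 1)) * ∑ i ∈ Finset.range k, δ i * r i ∧
    ((∑ i ∈ Finset.range k, δ i * r i) ≤ 0 → (∑ i ∈ Finset.range k, δ i) < 0) := by
  obtain ⟨s₀, hs₀1, hs₀k, hs₀neg⟩ := hneg
  have hrk : 0 < r (k - 1) := by
    rcases eq_or_lt_of_le (Nat.one_le_iff_ne_zero.mpr (by omega) : 1 ≤ k - 1) with h | h
    · rw [← h] at *; exact hrpos.trans (hrmono 0 1 one_pos (by omega))
    · exact hrpos.trans (hrmono 0 (k-1) (by omega) (by omega))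
  have habel : ∑ i ∈ Finset.range k, r i • δ i =
      r (k-1) • (∑ i ∈ Finset.range k, δ i) -
      ∑ i ∈ Finset.range (k-1), (r (i+1) - r i) • (∑ j ∈ Finset.range (i+1), δ j) :=
    Finset.sum_range_by_parts r δ k
  simp only [smul_eq_mul] at habel
  have hT : ∑ i ∈ Finset.range (k-1), (r (i+1) - r i) * (∑ j ∈ Finset.range (i+1), δ j) < 0 := by
    have h0 : (0:ℝ) = ∑ i ∈ Finset.range (k-1), (0:ℝ) := by simp
    rw [h0]
    apply Finset.sum_lt_sum
    · intro i hi
      rw [Finset.mem_range] at hi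
      have h1 : 0 < r (i+1) - r i := sub_pos.mpr (hrmono i (i+1) (by omega) (by omega))
      exact mul_nonpos_of_nonneg_of_nonpos h1.le (hpart (i+1) (by omega) (by omega))
    · refine ⟨s₀ - 1, Finset.mem_range.mpr (by omega), ?_⟩
      have h1 : 0 < r (s₀-1+1) - r (s₀-1) :=
        sub_pos.mpr (hrmono (s₀-1) (s₀-1+1) (by omega) (by omega))
      have h2 : s₀ - 1 + 1 = s₀ := by omega
      rw [h2]; rw [h2] at h1
      exact mul_neg_of_pos_of_neg h1 hs₀neg
  have heq : ∑ i ∈ Finset.range k, δ i * r i = ∑ i ∈ Finset.range k, r i * δ i := by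
    simp [mul_comm]
  have hlt : r (k-1) * (∑ i ∈ Finset.range k, δ i) < ∑ i ∈ Finset.range k, δ i * r i := by
    rw [heq, habel]; linarith
  have hmain : (∑ i ∈ Finset.range k, δ i) <
      (1 / r (k - 1)) * ∑ i ∈ Finset.range k, δ i * r i := by
    rw [div_mul_eq_mul_div, one_mul, lt_div_iff₀ hrk, mul_comm]
    exact hlt
  refine ⟨hmain, fun h ↦ ?_⟩
  calc (∑ i ∈ Finset.range k, δ i) < (1 / r (k - 1)) * ∑ i ∈ Finset.range k, δ i * r i := hmain
    _ ≤ 0 := mul_nonpos_of_nonneg_of_nonpos (by positivity) h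
end

section
/- Let p and q be monic polynomials of degree n over the reals, where q has n distinct real roots μ_1, …, μ_n and p has real roots λ_1, …, λ_n (counted with multiplicity). Then Σ_{i=1}^{n} p(μ_i)/q'(μ_i) = Σ_{i=1}^{n} μ_i − Σ_{i=1}^{n} λ_i. -/
open Polynomial Finset

/-- **Sum of residues of `p/q`.**
Let `p` and `q` be monic real polynomials of degree `n`, where `q` has `n` distinct
real roots `μ₁, …, μₙ` and `q` has `n` distinct
real roots `μ₁, …, μₙ` and `p` has real roots `λ₁, …, λₙ` (with multiplicity).
Then `∑_{i=1}^{n} p(μᵢ)/q'(μᵢ) = ∑ μᵢ − ∑ λᵢ`. -/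
theorem sum_of_residues_eq_diff_of_root_sums
    (n : ℕ) (lam mu : Fin n → ℝ)
    (hmu : Function.Injective mu)
    (p q : Polynomial ℝ)
    (hp : p = ∏ i, (X - C (lam i)))
    (hq : q = ∏ i, (X - C (mu i))) :
    ∑ i, p.eval (mu i) / (Polynomial.derivative q).eval (mu i) =
      (∑ i, mu i) - ∑ i, lam i := by
  classical
  rcases Nat.eq_zero_or_pos n with h0 | hn
  · subst h0; simp
  have hmu' : Set.InjOn mu (Finset.univ : Finset (Fin n)) := fun a _ b _ h => hmu h
  set r : ℝ[X] := p - q with hr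
  have hpmonic : p.Monic := hp ▸ monic_prod_of_monic _ _ fun i _ => monic_X_sub_C _
  have hqmonic : q.Monic := hq ▸ monic_prod_of_monic _ _ fun i _ => monic_X_sub_C _
  have hpdeg : p.natDegree = n := by
    rw [hp, natDegree_prod _ _ fun i _ => X_sub_C_ne_zero _]
    simp
  have hqdeg : q.natDegree = n := by
    rw [hq, natDegree_prod _ _ fun i _ => X_sub_C_ne_zero _]
    simp
  -- q evaluated at its roots is 0
  have hqeval : ∀ i : Fin n, q.eval (mu i) = 0 := by
    intro i
    rw [hq, eval_prod]
    exact Finset.prod_eq_zero (mem_univ i) (by simp)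
  -- derivative of q at mu i
  have hqnodal : q = Lagrange.nodal Finset.univ mu := by
    rw [hq, Lagrange.nodal_eq]
  have hqderiv : ∀ i : Fin n,
      (Polynomial.derivative q).eval (mu i) = ∏ j ∈ Finset.univ.erase i, (mu i - mu j) := by
    intro i
    rw [hqnodal, Lagrange.eval_nodal_derivative_eval_node_eq (mem_univ i), Lagrange.eval_nodal]
  have hprodne : ∀ i : Fin n, (∏ j ∈ Finset.univ.erase i, (mu i - mu j)) ≠ 0 := by
    intro i
    refine Finset.prod_ne_zero_iff.mpr fun j hj => ?_
    have : j ≠ i := (Finset.mem_erase.mp hj).1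
    exact sub_ne_zero_of_ne fun h => this (hmu h.symm)
  -- degree of r is less than n
  have hrdeg : r.degree < (Finset.univ : Finset (Fin n)).card := by
    have hdp : p.degree = (n : ℕ) := by
      rw [degree_eq_natDegree hpmonic.ne_zero, hpdeg]
    have hdq : q.degree = (n : ℕ) := by
      rw [degree_eq_natDegree hqmonic.ne_zero, hqdeg]
    have h1 : p.degree = q.degree := hdp.trans hdq.symm
    have := degree_sub_lt h1 hpmonic.ne_zero (by rw [hpmonic.leadingCoeff, hqmonic.leadingCoeff])
    rw [hdp] at this
    simpa using this
  -- r is its own Lagrange interpolation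
  have hinterp := Lagrange.eq_interpolate hmu' hrdeg
  -- coefficient of each basis polynomial
  have hbasis : ∀ i : Fin n, (Lagrange.basis Finset.univ mu i).coeff (n - 1)
      = (∏ j ∈ Finset.univ.erase i, (mu i - mu j))⁻¹ := by
    intro i
    have hb : Lagrange.basis Finset.univ mu i
        = C (∏ j ∈ Finset.univ.erase i, (mu i - mu j)⁻¹) *
          ∏ j ∈ Finset.univ.erase i, (X - C (mu j)) := by
      rw [Lagrange.basis, map_prod, ← Finset.prod_mul_distrib]
      rfl
    have hm : (∏ j ∈ Finset.univ.erase i, (X - C (mu j))).Monic :=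
      monic_prod_of_monic _ _ fun j _ => monic_X_sub_C _
    have hd : (∏ j ∈ Finset.univ.erase i, (X - C (mu j))).natDegree = n - 1 := by
      rw [natDegree_prod _ _ fun j _ => X_sub_C_ne_zero _]
      simp [Finset.card_erase_of_mem]
    rw [hb, coeff_C_mul, ← hd, hm.coeff_natDegree, mul_one, Finset.prod_inv_distrib]
  -- coefficient (n-1) of r both ways
  have hcard : (Finset.univ : Finset (Fin n)).card = n := by simp
  have hcoeffp : p.coeff (n - 1) = -∑ i, lam i := by
    have := prod_X_sub_C_coeff_card_pred (Finset.univ : Finset (Fin n)) lam (by simpa using hn)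
    rw [hp]; rw [hcard] at this; exact this
  have hcoeffq : q.coeff (n - 1) = -∑ i, mu i := by
    have := prod_X_sub_C_coeff_card_pred (Finset.univ : Finset (Fin n)) mu (by simpa using hn)
    rw [hq]; rw [hcard] at this; exact this
  have hrc : r.coeff (n - 1) = (∑ i, mu i) - ∑ i, lam i := by
    rw [hr, coeff_sub, hcoeffp, hcoeffq]; ring
  have hrc2 : r.coeff (n - 1)
      = ∑ i, r.eval (mu i) * (∏ j ∈ Finset.univ.erase i, (mu i - mu j))⁻¹ := by
    conv_lhs => rw [hinterp]
    rw [Lagrange.interpolate_apply, finset_sum_coeff]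
    refine Finset.sum_congr rfl fun i _ => ?_
    rw [coeff_C_mul, hbasis]
  -- assemble
  calc ∑ i, p.eval (mu i) / (Polynomial.derivative q).eval (mu i)
      = ∑ i, r.eval (mu i) * (∏ j ∈ Finset.univ.erase i, (mu i - mu j))⁻¹ := by
        refine Finset.sum_congr rfl fun i _ => ?_
        rw [hqderiv, div_eq_mul_inv, hr, eval_sub, hqeval, sub_zero]
    _ = r.coeff (n - 1) := hrc2.symm
    _ = (∑ i, mu i) - ∑ i, lam i := hrc
end

section
/- Let p and q be monic real-rooted polynomials of degree n with a common interlacer and simple pairwise distinct roots λ_1 > … > λ_n (of p) and μ_1 > … > μ_n (of q). Then for every i, the residue p(μ_i)/q'(μ_i) has the same sign as μ_i − λ_i: it is positive if μ_i > λ_i and negative if μ_i < λ_i. -/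
open Polynomial Finset

/-- **Sign of the residues.**
Let `p, q` be monic real-rooted polynomials of degree `n` with a common interlacer
and simple pairwise distinct roots `λ₁ > … > λₙ` (of `p`) and `μ₁ > … > μₙ`
(of `q`).  Then for every `i` the residue `p(μᵢ)/q'(μᵢ)` has the sign of
`μᵢ − λᵢ`: it is positive if `μᵢ > λᵢ` and negative if `μᵢ < λᵢ`. -/
theorem sign_of_residues
    (n : ℕ) (lam mu : Fin n → ℝ)
    (hlam : StrictAnti lam) (hmu : StrictAnti mu)
    (hdistinct : ∀ i, lam i ≠ mu i)
    (hinterlacer : ∀ i j : Fin n, i < j → max (lam j) (mu j) < min (lam i) (mu i))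
    (p q : Polynomial ℝ)
    (hp : p = ∏ i, (X - C (lam i)))
    (hq : q = ∏ i, (X - C (mu i))) :
    ∀ i : Fin n,
      (lam i < mu i → 0 < p.eval (mu i) / (Polynomial.derivative q).eval (mu i)) ∧
      (mu i < lam i → p.eval (mu i) / (Polynomial.derivative q).eval (mu i) < 0) := by
  intro i
  have hpe : p.eval (mu i) = ∏ l, (mu i - lam l) := by
    simp [hp, eval_prod]
  have hqe : (derivative q).eval (mu i) = ∏ l ∈ univ.erase i, (mu i - mu l) := by
    have hmem : mu i ∈ Multiset.map mu univ.val :=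
      Multiset.mem_map_of_mem _ (Finset.mem_val.mpr (mem_univ i))
    have h1 : q = (Multiset.map (fun a => X - C a) (Multiset.map mu univ.val)).prod := by
      rw [hq, Multiset.map_map]; rfl
    rw [h1, eval_multiset_prod_X_sub_C_derivative hmem,
      ← Multiset.map_erase _ hmu.injective i univ.val, Multiset.map_map]
    rfl
  -- each factor for l ≠ i is positive
  have hfac : ∀ l ∈ univ.erase i, 0 < (mu i - lam l) / (mu i - mu l) := by
    intro l hl
    have hli : l ≠ i := (Finset.mem_erase.mp hl).1
    rcases lt_or_gt_of_ne hli with h | h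
    · have H := hinterlacer l i h
      have h1 : mu i < lam l := lt_of_le_of_lt (le_max_right _ _) (H.trans_le (min_le_left _ _))
      have h2 : mu i < mu l := lt_of_le_of_lt (le_max_right _ _) (H.trans_le (min_le_right _ _))
      exact div_pos_iff.mpr (Or.inr ⟨by linarith, by linarith⟩)
    · have H := hinterlacer i l h
      have h1 : lam l < mu i := lt_of_le_of_lt (le_max_left _ _) (H.trans_le (min_le_right _ _))
      have h2 : mu l < mu i := lt_of_le_of_lt (le_max_right _ _) (H.trans_le (min_le_right _ _))
      exact div_pos (by linarith) (by linarith)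
  have hR : 0 < ∏ l ∈ univ.erase i, (mu i - lam l) / (mu i - mu l) :=
    Finset.prod_pos hfac
  have key : p.eval (mu i) / (derivative q).eval (mu i)
      = (mu i - lam i) * ∏ l ∈ univ.erase i, (mu i - lam l) / (mu i - mu l) := by
    rw [hpe, hqe, ← Finset.mul_prod_erase univ _ (mem_univ i), mul_div_assoc,
      ← Finset.prod_div_distrib]
  constructor
  · intro h
    rw [key]
    exact mul_pos (by linarith) hR
  · intro h
    rw [key]
    exact mul_neg_of_neg_of_pos (by linarith) hR
end
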